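/- arXiv:2406.18418 — 4 statements merged into one kernel-verified Lean document; each statement's English description precedes it below -/
import Mathlib

section
/- (Property of the top-c quantizer, unbiased case.) Let L be a positive integer, x ∈ ℝ^L, 1 ≤ c ≤ L, let I be a top-c index set for x and s = S(x) the top-c sparsification of x relative to I. Let β_q² ≥ 0, σ_q² ≥ 0, set α = 1/(1+β_q²), and let Y be a square-integrable random vector in ℝ^L such that E[Y] = s (unbiasedness) and E‖s − Y‖² ≤ β_q²‖s‖² + σ_q². Then E‖x − αY‖² ≤ (1 − c/(L(1+β_q²)))‖x‖² + σ_q²/(1+β_q²)². -/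
open MeasureTheory

/-- **Property of the top-c quantizer (unbiased case).** Let `I` be a top-`c` index
set for `x ∈ ℝ^L` and `s` the top-`c` sparsification of `x` relative to `I`.
Let `α = 1/(1+β_q²)` and let `Y` be a square-integrable random vector with `E[Y] = s`
and `E‖s − Y‖² ≤ β_q²‖s‖² + σ_q²`. Then
`E‖x − αY‖² ≤ (1 − c/(L(1+β_q²)))‖x‖² + σ_q²/(1+β_q²)²`.
Here `βq2` and `σq2` denote the parameters `β_q²` and `σ_q²`. -/
theorem top_c_quantizer_unbiased {L : ℕ} (hL : 0 < L)
    (x : EuclideanSpace ℝ (Fin L))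
    (c : ℕ) (hc1 : 1 ≤ c) (hcL : c ≤ L)
    (I : Finset (Fin L)) (hI : I.card = c)
    (htop : ∀ j ∈ I, ∀ l ∉ I, |x l| ≤ |x j|)
    (s : EuclideanSpace ℝ (Fin L)) (hs : ∀ j, s j = if j ∈ I then x j else 0)
    (βq2 σq2 α : ℝ) (hβ : 0 ≤ βq2) (hσ : 0 ≤ σq2)
    (hα : α = 1 / (1 + βq2))
    {Ω : Type*} [MeasureSpace Ω] [IsProbabilityMeasure (volume : Measure Ω)]
    (Y : Ω → EuclideanSpace ℝ (Fin L)) (hY : MemLp Y 2)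
    (hmean : ∫ ω, Y ω = s)
    (hdist : ∫ ω, ‖s - Y ω‖ ^ 2 ≤ βq2 * ‖s‖ ^ 2 + σq2) :
    ∫ ω, ‖x - α • Y ω‖ ^ 2
      ≤ (1 - (c : ℝ) / (L * (1 + βq2))) * ‖x‖ ^ 2 + σq2 / (1 + βq2) ^ 2 := by
  have hβ1 : (0 : ℝ) < 1 + βq2 := by linarith
  have hα0 : 0 < α := by rw [hα]; positivity
  have hα1 : α ≤ 1 := by rw [hα, div_le_one hβ1]; linarith
  set a : EuclideanSpace ℝ (Fin L) := x - α • s with ha_def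
  -- integrability facts
  have hYint : Integrable Y := hY.integrable one_le_two
  have hsY : MemLp (fun ω => s - Y ω) 2 := (memLp_const s).sub hY
  have hsYint : Integrable (fun ω => s - Y ω) := hsY.integrable one_le_two
  have hsqint : Integrable (fun ω => ‖s - Y ω‖ ^ 2) :=
    (memLp_two_iff_integrable_sq_norm hsY.aestronglyMeasurable).mp hsY
  have hcross : Integrable (fun ω => (inner ℝ a (s - Y ω) : ℝ)) :=
    hsYint.const_inner a
  -- cross term has zero integral
  have hcross0 : (∫ ω, (inner ℝ a (s - Y ω) : ℝ)) = 0 := by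
    rw [integral_inner hsYint]
    have : (∫ ω, (s - Y ω)) = 0 := by
      rw [integral_sub (integrable_const s) hYint, hmean, integral_const]
      simp
    rw [this, inner_zero_right]
  -- pointwise expansion
  have hpt : ∀ ω, ‖x - α • Y ω‖ ^ 2
      = ‖a‖ ^ 2 + (2 * α) * (inner ℝ a (s - Y ω) : ℝ) + α ^ 2 * ‖s - Y ω‖ ^ 2 := by
    intro ω
    have h1 : x - α • Y ω = a + α • (s - Y ω) := by
      rw [ha_def]; module
    rw [h1, norm_add_sq_real, real_inner_smul_right, norm_smul]
    simp only [Real.norm_eq_abs, mul_pow, sq_abs]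
    ring
  -- compute the integral
  have hint : (∫ ω, ‖x - α • Y ω‖ ^ 2)
      = ‖a‖ ^ 2 + α ^ 2 * ∫ ω, ‖s - Y ω‖ ^ 2 := by
    calc (∫ ω, ‖x - α • Y ω‖ ^ 2)
        = ∫ ω, (‖a‖ ^ 2 + (2 * α) * (inner ℝ a (s - Y ω) : ℝ) + α ^ 2 * ‖s - Y ω‖ ^ 2) := by
          exact integral_congr_ae (Filter.Eventually.of_forall hpt)
      _ = ‖a‖ ^ 2 + α ^ 2 * ∫ ω, ‖s - Y ω‖ ^ 2 := by
          rw [integral_add (by exact (integrable_const _).add (hcross.const_mul _))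
              (hsqint.const_mul _),
            integral_add (integrable_const _) (hcross.const_mul _),
            integral_const, integral_const_mul, integral_const_mul, hcross0]
          simp
  -- inner product of x - s and s vanishes
  have hip : (inner ℝ (x - s) s : ℝ) = 0 := by
    rw [PiLp.inner_apply]
    refine Finset.sum_eq_zero fun i _ => ?_
    by_cases h : i ∈ I <;> simp [hs i, h]
  -- Pythagoras: ‖x‖² = ‖x-s‖² + ‖s‖²
  have hxs : ‖x‖ ^ 2 = ‖x - s‖ ^ 2 + ‖s‖ ^ 2 := by
    have h := norm_add_sq_real (x - s) s
    rw [sub_add_cancel, hip] at h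
    linarith
  -- ‖a‖² = ‖x-s‖² + (1-α)²‖s‖²
  have ha2 : ‖a‖ ^ 2 = ‖x - s‖ ^ 2 + (1 - α) ^ 2 * ‖s‖ ^ 2 := by
    have h1 : a = (x - s) + (1 - α) • s := by rw [ha_def]; module
    rw [h1, norm_add_sq_real, real_inner_smul_right, hip, norm_smul]
    simp only [Real.norm_eq_abs, mul_pow, sq_abs]
    ring
  -- energy bound: c‖x‖² ≤ L‖s‖²
  have hnx : ‖x‖ ^ 2 = ∑ i, (x i) ^ 2 := by
    rw [EuclideanSpace.norm_eq, Real.sq_sqrt (by positivity)]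
    simp [sq_abs]
  have hns : ‖s‖ ^ 2 = ∑ i ∈ I, (x i) ^ 2 := by
    rw [EuclideanSpace.norm_eq, Real.sq_sqrt (by positivity)]
    simp only [Real.norm_eq_abs, sq_abs]
    rw [← Finset.sum_subset (Finset.subset_univ I)
      (fun i _ hi => by simp [hs i, hi])]
    exact Finset.sum_congr rfl fun i hi => by simp [hs i, hi]
  have hB : (c : ℝ) * ‖x‖ ^ 2 ≤ (L : ℝ) * ‖s‖ ^ 2 := by
    have h1 : ∑ l ∈ Iᶜ, ∑ _j ∈ I, (x l) ^ 2 ≤ ∑ l ∈ Iᶜ, ∑ j ∈ I, (x j) ^ 2 := by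
      refine Finset.sum_le_sum fun l hl => Finset.sum_le_sum fun j hj => ?_
      have := htop j hj l (Finset.mem_compl.mp hl)
      calc (x l) ^ 2 = |x l| ^ 2 := (sq_abs _).symm
        _ ≤ |x j| ^ 2 := by exact pow_le_pow_left₀ (abs_nonneg _) this 2
        _ = (x j) ^ 2 := sq_abs _
    have hcardc : (Iᶜ : Finset (Fin L)).card = L - c := by
      rw [Finset.card_compl, hI, Fintype.card_fin]
    have h2 : (c : ℝ) * ∑ l ∈ Iᶜ, (x l) ^ 2 ≤ ((L : ℝ) - c) * ∑ j ∈ I, (x j) ^ 2 := by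
      have hlhs : ∑ l ∈ Iᶜ, ∑ _j ∈ I, (x l) ^ 2 = (c : ℝ) * ∑ l ∈ Iᶜ, (x l) ^ 2 := by
        simp [Finset.sum_const, hI, Finset.mul_sum]
      have hrhs : ∑ _l ∈ Iᶜ, ∑ j ∈ I, (x j) ^ 2 = ((L : ℝ) - c) * ∑ j ∈ I, (x j) ^ 2 := by
        rw [Finset.sum_const, hcardc, nsmul_eq_mul, Nat.cast_sub hcL]
      rw [← hlhs, ← hrhs]; exact h1
    have hsplit : ∑ i, (x i) ^ 2 = ∑ i ∈ I, (x i) ^ 2 + ∑ i ∈ Iᶜ, (x i) ^ 2 :=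
      (Finset.sum_add_sum_compl I _).symm
    rw [hnx, hns, hsplit]
    have hc' : (c : ℝ) ≤ L := Nat.cast_le.mpr hcL
    nlinarith [h2]
  -- combine
  rw [hint, ha2]
  have hE : α ^ 2 * (∫ ω, ‖s - Y ω‖ ^ 2) ≤ α ^ 2 * (βq2 * ‖s‖ ^ 2 + σq2) := by
    exact mul_le_mul_of_nonneg_left hdist (by positivity)
  have hαeq : α * (1 + βq2) = 1 := by rw [hα]; field_simp
  have hL' : (0 : ℝ) < L := Nat.cast_pos.mpr hL
  have hkey : α * ‖s‖ ^ 2 ≥ ((c : ℝ) / (L * (1 + βq2))) * ‖x‖ ^ 2 := by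
    rw [ge_iff_le, div_mul_eq_mul_div, div_le_iff₀ (by positivity)]
    calc (c : ℝ) * ‖x‖ ^ 2 ≤ (L : ℝ) * ‖s‖ ^ 2 := hB
      _ = α * ‖s‖ ^ 2 * (L * (1 + βq2)) := by
          linear_combination (L : ℝ) * ‖s‖ ^ 2 * hαeq.symm
  have hσeq : α ^ 2 * σq2 = σq2 / (1 + βq2) ^ 2 := by
    rw [hα]; field_simp
  -- (1-α)² + α²βq2 = 1 - α
  have halg2 : (1 - α) ^ 2 * ‖s‖ ^ 2 + α ^ 2 * βq2 * ‖s‖ ^ 2 = (1 - α) * ‖s‖ ^ 2 := by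
    linear_combination α * ‖s‖ ^ 2 * hαeq
  have hE' : α ^ 2 * (∫ ω, ‖s - Y ω‖ ^ 2)
      ≤ α ^ 2 * βq2 * ‖s‖ ^ 2 + σq2 / (1 + βq2) ^ 2 := by
    calc α ^ 2 * (∫ ω, ‖s - Y ω‖ ^ 2) ≤ α ^ 2 * (βq2 * ‖s‖ ^ 2 + σq2) := hE
      _ = α ^ 2 * βq2 * ‖s‖ ^ 2 + α ^ 2 * σq2 := by ring
      _ = α ^ 2 * βq2 * ‖s‖ ^ 2 + σq2 / (1 + βq2) ^ 2 := by rw [hσeq]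
  linarith [hxs, hE', hkey, halg2]
end

section
/- Let U be a real M×P matrix with orthonormal columns (UᵀU = I_P), and let A be a real M×M matrix satisfying AU = U, UᵀA = Uᵀ, and ρ(A − UUᵀ) < 1, where ρ denotes the spectral radius. Then for every γ ∈ (0,1], the matrix A' = (1−γ)I_M + γA also satisfies A'U = U, UᵀA' = Uᵀ, and ρ(A' − UUᵀ) < 1. -/
open Matrix

/-- The spectral radius of a real square matrix: the supremum of the moduli of the
(complex) eigenvalues, computed via the complexification of the matrix. -/
noncomputable def realMatrixSpectralRadius {n : Type*} [Fintype n] [DecidableEq n]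
    (M : Matrix n n ℝ) : ℝ :=
  sSup ((fun z : ℂ => ‖z‖) '' spectrum ℂ (M.map Complex.ofReal))

private lemma aux_not_mem_spectrum {n : Type*} [Fintype n] [DecidableEq n]
    (Q B : Matrix n n ℂ) (hQ : Q * Q = Q) (hQB : Q * B = B) (hBQ : B * Q = B)
    (γ : ℂ) (hγ : γ ≠ 0) (lam : ℂ) (hlam0 : lam ≠ 0)
    (hμ : (lam - (1 - γ)) / γ ∉ spectrum ℂ B) :
    lam ∉ spectrum ℂ ((1 - γ) • Q + γ • B) := by
  set μ : ℂ := (lam - (1 - γ)) / γ with hμdef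
  rw [spectrum.notMem_iff] at hμ ⊢
  rw [Algebra.algebraMap_eq_smul_one] at hμ ⊢
  obtain ⟨u, hu⟩ := hμ
  set R : Matrix n n ℂ := ↑u⁻¹ with hR
  have hR1 : (μ • 1 - B) * R = 1 := by rw [← hu]; exact u.mul_inv
  have hR2 : R * (μ • 1 - B) = 1 := by rw [← hu]; exact u.inv_mul
  have hcomm : (μ • 1 - B) * Q = Q * (μ • 1 - B) := by
    simp [Matrix.sub_mul, Matrix.mul_sub, Matrix.smul_mul, Matrix.mul_smul, hQB, hBQ]
  have hRQ : R * Q = Q * R := by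
    calc R * Q = R * (Q * ((μ • 1 - B) * R)) := by rw [hR1, Matrix.mul_one]
    _ = R * ((μ • 1 - B) * Q) * R := by rw [← Matrix.mul_assoc Q, ← hcomm]; noncomm_ring
    _ = R * (μ • 1 - B) * (Q * R) := by noncomm_ring
    _ = Q * R := by rw [hR2, Matrix.one_mul]
  have hQRQ : Q * (R * Q) = R * Q := by
    rw [← Matrix.mul_assoc, ← hRQ, Matrix.mul_assoc, hQ]
  have hμγ : γ * μ = lam - (1 - γ) := by
    rw [hμdef, mul_div_assoc', mul_div_cancel_left₀ _ hγ]
  have hkey : lam • (1 : Matrix n n ℂ) - ((1 - γ) • Q + γ • B)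
      = lam • ((1 : Matrix n n ℂ) - Q) + γ • ((μ • 1 - B) * Q) := by
    have h2 : (μ • (1 : Matrix n n ℂ) - B) * Q = μ • Q - B := by
      rw [Matrix.sub_mul, Matrix.smul_mul, Matrix.one_mul, hBQ]
    rw [h2, smul_sub, smul_sub, smul_smul, hμγ]
    module
  have e1 : ((1 : Matrix n n ℂ) - Q) * (1 - Q) = 1 - Q := by
    have h : ((1 : Matrix n n ℂ) - Q) * (1 - Q) = 1 - Q - Q + Q * Q := by noncomm_ring
    rw [h, hQ]; abel
  have e2 : ((1 : Matrix n n ℂ) - Q) * (R * Q) = 0 := by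
    rw [Matrix.sub_mul, Matrix.one_mul, hQRQ, sub_self]
  have e3 : ((μ • 1 - B) * Q) * (1 - Q) = 0 := by
    rw [Matrix.mul_sub, Matrix.mul_one, Matrix.mul_assoc, hQ, sub_self]
  have e4 : ((μ • 1 - B) * Q) * (R * Q) = Q := by
    rw [Matrix.mul_assoc, hQRQ, ← Matrix.mul_assoc, hR1, Matrix.one_mul]
  have prod : (lam • ((1 : Matrix n n ℂ) - Q) + γ • ((μ • 1 - B) * Q)) *
      (lam⁻¹ • ((1 : Matrix n n ℂ) - Q) + γ⁻¹ • (R * Q)) = 1 := by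
    simp only [Matrix.add_mul, Matrix.mul_add, Matrix.smul_mul, Matrix.mul_smul,
      e1, e2, e3, e4, smul_smul, smul_zero, add_zero, zero_add]
    rw [inv_mul_cancel₀ hlam0, inv_mul_cancel₀ hγ, one_smul, one_smul, sub_add_cancel]
  rw [hkey]
  have := invertibleOfRightInverse _ _ prod
  exact isUnit_of_invertible _

/-- **Damping preserves the combination-matrix conditions.** Let `U` be a real
`M×P` matrix with orthonormal columns and `A` a real `M×M` matrix with `AU = U`,
`UᵀA = Uᵀ`, and `ρ(A − UUᵀ) < 1`. Then for every `γ ∈ (0,1]`, the matrix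
`A' = (1−γ)I + γA` satisfies `A'U = U`, `UᵀA' = Uᵀ`, and `ρ(A' − UUᵀ) < 1`. -/
theorem damped_combination_matrix {M P : Type*} [Fintype M] [Fintype P]
    [DecidableEq M] [DecidableEq P]
    (U : Matrix M P ℝ) (hU : Uᵀ * U = 1)
    (A : Matrix M M ℝ)
    (hAU : A * U = U) (hUA : Uᵀ * A = Uᵀ)
    (hρ : realMatrixSpectralRadius (A - U * Uᵀ) < 1)
    (γ : ℝ) (hγ0 : 0 < γ) (hγ1 : γ ≤ 1) :
    ((1 - γ) • (1 : Matrix M M ℝ) + γ • A) * U = U ∧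
    Uᵀ * ((1 - γ) • (1 : Matrix M M ℝ) + γ • A) = Uᵀ ∧
    realMatrixSpectralRadius (((1 - γ) • (1 : Matrix M M ℝ) + γ • A) - U * Uᵀ) < 1 := by
  refine ⟨?_, ?_, ?_⟩
  · rw [Matrix.add_mul, Matrix.smul_mul, Matrix.smul_mul, Matrix.one_mul, hAU,
      ← add_smul, sub_add_cancel, one_smul]
  · rw [Matrix.mul_add, Matrix.mul_smul, Matrix.mul_smul, Matrix.mul_one, hUA,
      ← add_smul, sub_add_cancel, one_smul]
  -- main spectral part
  · set Prj : Matrix M M ℝ := U * Uᵀ with hPrj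
    have hPP : Prj * Prj = Prj := by
      rw [hPrj, Matrix.mul_assoc, ← Matrix.mul_assoc Uᵀ U, hU, Matrix.one_mul]
    have hPA : Prj * A = Prj := by rw [hPrj, Matrix.mul_assoc, hUA]
    have hAP : A * Prj = Prj := by rw [hPrj, ← Matrix.mul_assoc, hAU]
    set B : Matrix M M ℝ := A - Prj with hB
    set Q : Matrix M M ℝ := 1 - Prj with hQdef
    have hQQ : Q * Q = Q := by
      have h : Q * Q = 1 - Prj - Prj + Prj * Prj := by rw [hQdef]; noncomm_ring
      rw [h, hPP, hQdef]; abel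
    have hQB : Q * B = B := by
      have h : Q * B = A - Prj - (Prj * A - Prj * Prj) := by rw [hQdef, hB]; noncomm_ring
      rw [h, hPA, hPP, sub_self, sub_zero, hB]
    have hBQ : B * Q = B := by
      have h : B * Q = A - Prj - (A * Prj - Prj * Prj) := by rw [hQdef, hB]; noncomm_ring
      rw [h, hAP, hPP, sub_self, sub_zero, hB]
    have hC : ((1 - γ) • (1 : Matrix M M ℝ) + γ • A) - U * Uᵀ
        = (1 - γ) • Q + γ • B := by
      rw [hQdef, hB, ← hPrj, smul_sub, smul_sub]
      module
    -- complexify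
    have mapsmul : ∀ (r : ℝ) (N : Matrix M M ℝ),
        (r • N).map Complex.ofReal = (r : ℂ) • N.map Complex.ofReal := by
      intro r N; ext i j
      simp [Matrix.map_apply, Complex.ofReal_mul]
    have mapmul : ∀ (N₁ N₂ : Matrix M M ℝ),
        (N₁ * N₂).map Complex.ofReal = N₁.map Complex.ofReal * N₂.map Complex.ofReal := by
      intro N₁ N₂
      exact Matrix.map_mul (f := Complex.ofRealHom)
    have mapadd : ∀ (N₁ N₂ : Matrix M M ℝ),
        (N₁ + N₂).map Complex.ofReal = N₁.map Complex.ofReal + N₂.map Complex.ofReal := by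
      intro N₁ N₂; ext i j; simp [Matrix.map_apply]
    set Qc : Matrix M M ℂ := Q.map Complex.ofReal with hQc
    set Bc : Matrix M M ℂ := B.map Complex.ofReal with hBc
    have hQcQc : Qc * Qc = Qc := by rw [hQc, ← mapmul, hQQ]
    have hQcBc : Qc * Bc = Bc := by rw [hQc, hBc, ← mapmul, hQB]
    have hBcQc : Bc * Qc = Bc := by rw [hQc, hBc, ← mapmul, hBQ]
    have hCc : (((1 - γ) • (1 : Matrix M M ℝ) + γ • A) - U * Uᵀ).map Complex.ofReal
        = (1 - (γ : ℂ)) • Qc + (γ : ℂ) • Bc := by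
      rw [hC, mapadd, mapsmul, mapsmul, hQc, hBc]
      push_cast
      ring_nf
    have hγc : (γ : ℂ) ≠ 0 := by exact_mod_cast hγ0.ne'
    -- the spectrum of Bc is finite and each element has norm < 1
    have hBceigs : ∀ μ ∈ spectrum ℂ Bc, ‖μ‖ < 1 := by
      intro μ hμ
      have hmem : ‖μ‖ ∈ (fun z : ℂ => ‖z‖) '' spectrum ℂ Bc := ⟨μ, hμ, rfl⟩
      have hfin : ((fun z : ℂ => ‖z‖) '' spectrum ℂ Bc).Finite :=
        (Matrix.finite_spectrum Bc).image _
      have := le_csSup hfin.bddAbove hmem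
      calc ‖μ‖ ≤ sSup ((fun z : ℂ => ‖z‖) '' spectrum ℂ Bc) := this
        _ < 1 := hρ
    -- each eigenvalue of the damped matrix has norm < 1
    have hkey : ∀ lam ∈ spectrum ℂ
        ((((1 - γ) • (1 : Matrix M M ℝ) + γ • A) - U * Uᵀ).map Complex.ofReal),
        ‖lam‖ < 1 := by
      intro lam hlam
      rw [hCc] at hlam
      by_cases h0 : lam = 0
      · simp [h0]
      · set μ : ℂ := (lam - (1 - (γ : ℂ))) / (γ : ℂ) with hμdef
        have hμmem : μ ∈ spectrum ℂ Bc := by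
          by_contra hcon
          exact aux_not_mem_spectrum Qc Bc hQcQc hQcBc hBcQc (γ : ℂ) hγc lam h0 hcon hlam
        have hμlt := hBceigs μ hμmem
        have hlameq : lam = (1 - (γ : ℂ)) + (γ : ℂ) * μ := by
          rw [hμdef]; field_simp; ring
        calc ‖lam‖ = ‖(1 - (γ : ℂ)) + (γ : ℂ) * μ‖ := by rw [hlameq]
          _ ≤ ‖(1 - (γ : ℂ))‖ + ‖(γ : ℂ) * μ‖ := norm_add_le _ _
          _ = (1 - γ) + γ * ‖μ‖ := by
              rw [norm_mul]
              have h1 : ((1 : ℂ) - (γ : ℂ)) = ((1 - γ : ℝ) : ℂ) := by push_cast; ring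
              rw [h1, Complex.norm_real, Complex.norm_real,
                Real.norm_of_nonneg (by linarith), Real.norm_of_nonneg hγ0.le]
          _ < (1 - γ) + γ * 1 := by
              have := mul_lt_mul_of_pos_left hμlt hγ0
              linarith
          _ = 1 := by ring
    -- conclude about the sSup
    unfold realMatrixSpectralRadius
    set T : Set ℝ := (fun z : ℂ => ‖z‖) '' spectrum ℂ
      ((((1 - γ) • (1 : Matrix M M ℝ) + γ • A) - U * Uᵀ).map Complex.ofReal) with hT
    have hTfin : T.Finite := (Matrix.finite_spectrum _).image _
    rcases T.eq_empty_or_nonempty with hTe | hTne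
    · rw [hTe, Real.sSup_empty]; norm_num
    · have hmem := hTne.csSup_mem hTfin
      obtain ⟨lam, hlam, heq⟩ := hmem
      rw [← heq]
      exact hkey lam hlam
end

section
/- Let D be a real symmetric M×M matrix satisfying σI ≼ D ≼ ΛI for constants 0 < σ ≤ Λ, and let μ be a step-size with 0 < μ < 1/Λ. Then for all vectors a, v ∈ ℝ^M: ‖(I − μD)a + μv‖² ≤ (1 − μσ)‖a‖² + (μ/σ)‖v‖². -/
open Matrix

lemma psd_smul {M : ℕ} {A : Matrix (Fin M) (Fin M) ℝ} (hA : A.PosSemidef) {c : ℝ}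
    (hc : 0 ≤ c) : (c • A).PosSemidef := by
  refine Matrix.PosSemidef.of_dotProduct_mulVec_nonneg ?_ (fun x => ?_)
  · unfold Matrix.IsHermitian
    rw [Matrix.conjTranspose_smul, hA.1]
    simp
  · rw [Matrix.smul_mulVec, dotProduct_smul, smul_eq_mul]
    exact mul_nonneg hc (hA.dotProduct_mulVec_nonneg x)

lemma dot_nonneg_of_psd {M : ℕ} {B : Matrix (Fin M) (Fin M) ℝ} (hB : B.PosSemidef)
    (x : Fin M → ℝ) : 0 ≤ x ⬝ᵥ B *ᵥ x := by
  simpa using hB.dotProduct_mulVec_nonneg x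

lemma dot_symm_mulVec {M : ℕ} {B : Matrix (Fin M) (Fin M) ℝ} (hB : Bᴴ = B)
    (x y : Fin M → ℝ) : x ⬝ᵥ B *ᵥ y = (B *ᵥ x) ⬝ᵥ y := by
  have hBt : Bᵀ = B := by
    ext i j
    simpa [Matrix.conjTranspose_apply] using congrFun (congrFun hB i) j
  rw [Matrix.dotProduct_mulVec, ← Matrix.mulVec_transpose, hBt]

open scoped MatrixOrder in
lemma quad_bound {M : ℕ} {B : Matrix (Fin M) (Fin M) ℝ} (hB : B.PosSemidef) {c : ℝ}
    (hc0 : 0 ≤ c) (hc : (c • (1 : Matrix (Fin M) (Fin M) ℝ) - B).PosSemidef)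
    (x : Fin M → ℝ) : (B *ᵥ x) ⬝ᵥ (B *ᵥ x) ≤ c ^ 2 * (x ⬝ᵥ x) := by
  set S := CFC.sqrt B with hS
  have hSH : Sᴴ = S := (CFC.sqrt_nonneg B).isSelfAdjoint.star_eq
  have hSS : S * S = B := CFC.sqrt_mul_sqrt_self B (Matrix.nonneg_iff_posSemidef.mpr hB)
  have hSBS : S * B * S = B * B := by
    rw [← hSS]
    simp only [Matrix.mul_assoc]
  have hQ : (c • B - B * B).PosSemidef := by
    have h := hc.mul_mul_conjTranspose_same S
    rw [hSH] at h
    have he : S * (c • (1 : Matrix (Fin M) (Fin M) ℝ) - B) * S = c • B - B * B := by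
      rw [mul_sub, sub_mul, Matrix.mul_smul, Matrix.smul_mul, mul_one,
        hSS, hSBS]
    rwa [he] at h
  have h1 : x ⬝ᵥ (B * B) *ᵥ x ≤ c * (x ⬝ᵥ B *ᵥ x) := by
    have h := dot_nonneg_of_psd hQ x
    rw [Matrix.sub_mulVec, dotProduct_sub, Matrix.smul_mulVec,
      dotProduct_smul, smul_eq_mul] at h
    linarith
  have h2 : x ⬝ᵥ B *ᵥ x ≤ c * (x ⬝ᵥ x) := by
    have h := dot_nonneg_of_psd hc x
    rw [Matrix.sub_mulVec, dotProduct_sub, Matrix.smul_mulVec,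
      dotProduct_smul, smul_eq_mul] at h
    simpa using h
  have h3 : (B *ᵥ x) ⬝ᵥ (B *ᵥ x) = x ⬝ᵥ (B * B) *ᵥ x := by
    rw [← Matrix.mulVec_mulVec, dot_symm_mulVec hB.1, dotProduct_comm]
  rw [h3]
  calc x ⬝ᵥ (B * B) *ᵥ x ≤ c * (x ⬝ᵥ B *ᵥ x) := h1
    _ ≤ c * (c * (x ⬝ᵥ x)) := mul_le_mul_of_nonneg_left h2 hc0
    _ = c ^ 2 * (x ⬝ᵥ x) := by ring

/-- **Contraction inequality for the in-subspace error component.** Let `D` be a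
real symmetric `M×M` matrix with `σI ≼ D ≼ ΛI` for `0 < σ ≤ Λ`, and let the
step-size satisfy `0 < μ < 1/Λ`. Then for all vectors `a, v ∈ ℝ^M`,
`‖(I − μD)a + μv‖² ≤ (1 − μσ)‖a‖² + (μ/σ)‖v‖²` in the Euclidean norm. -/
theorem contraction_inequality {M : ℕ}
    (D : Matrix (Fin M) (Fin M) ℝ) (hD : D.IsSymm)
    (σ Λ : ℝ) (hσ : 0 < σ) (hσΛ : σ ≤ Λ)
    (hlow : (D - σ • (1 : Matrix (Fin M) (Fin M) ℝ)).PosSemidef)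
    (hup : (Λ • (1 : Matrix (Fin M) (Fin M) ℝ) - D).PosSemidef)
    (μ : ℝ) (hμ0 : 0 < μ) (hμ : μ < 1 / Λ) :
    ∀ a v : EuclideanSpace ℝ (Fin M),
      ‖Matrix.toEuclideanLin ((1 : Matrix (Fin M) (Fin M) ℝ) - μ • D) a + μ • v‖ ^ 2
        ≤ (1 - μ * σ) * ‖a‖ ^ 2 + (μ / σ) * ‖v‖ ^ 2 := by
  intro a v
  have hΛ0 : 0 < Λ := lt_of_lt_of_le hσ hσΛ
  have hμΛ : μ * Λ < 1 := by
    rw [lt_div_iff₀ hΛ0] at hμ; linarith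
  have hμσ : μ * σ < 1 := lt_of_le_of_lt (by nlinarith) hμΛ
  set B : Matrix (Fin M) (Fin M) ℝ := (1 : Matrix (Fin M) (Fin M) ℝ) - μ • D with hBdef
  have hc0 : (0:ℝ) ≤ 1 - μ * σ := by linarith
  have hBpsd : B.PosSemidef := by
    have h1 : ((1 - μ * Λ) • (1 : Matrix (Fin M) (Fin M) ℝ)).PosSemidef :=
      psd_smul Matrix.PosSemidef.one (by linarith : (0:ℝ) ≤ 1 - μ * Λ)
    have h2 : (μ • (Λ • (1 : Matrix (Fin M) (Fin M) ℝ) - D)).PosSemidef :=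
      psd_smul hup (le_of_lt hμ0)
    have he : B = (1 - μ * Λ) • (1 : Matrix (Fin M) (Fin M) ℝ)
        + μ • (Λ • (1 : Matrix (Fin M) (Fin M) ℝ) - D) := by
      rw [hBdef, smul_sub, sub_smul, one_smul, smul_smul]
      abel
    rw [he]; exact h1.add h2
  have hcB : ((1 - μ * σ) • (1 : Matrix (Fin M) (Fin M) ℝ) - B).PosSemidef := by
    have h2 : (μ • (D - σ • (1 : Matrix (Fin M) (Fin M) ℝ))).PosSemidef :=
      psd_smul hlow (le_of_lt hμ0)
    have he : (1 - μ * σ) • (1 : Matrix (Fin M) (Fin M) ℝ) - B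
        = μ • (D - σ • (1 : Matrix (Fin M) (Fin M) ℝ)) := by
      rw [hBdef, smul_sub, sub_smul, one_smul, smul_smul]
      abel
    rw [he]; exact h2
  have hkey : ‖Matrix.toEuclideanLin B a‖ ≤ (1 - μ * σ) * ‖a‖ := by
    have hq := quad_bound hBpsd hc0 hcB ((WithLp.equiv 2 (Fin M → ℝ)) a)
    have hn1 : ‖Matrix.toEuclideanLin B a‖ ^ 2
        = (B *ᵥ (WithLp.equiv 2 (Fin M → ℝ)) a) ⬝ᵥ (B *ᵥ (WithLp.equiv 2 (Fin M → ℝ)) a) := by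
      rw [Matrix.toEuclideanLin_apply, ← real_inner_self_eq_norm_sq]
      simp [EuclideanSpace.norm_sq_eq, PiLp.inner_apply, dotProduct, Real.norm_eq_abs, sq_abs, ← sq]
    have hn2 : ‖a‖ ^ 2
        = ((WithLp.equiv 2 (Fin M → ℝ)) a) ⬝ᵥ ((WithLp.equiv 2 (Fin M → ℝ)) a) := by
      rw [← real_inner_self_eq_norm_sq]
      simp [EuclideanSpace.norm_sq_eq, PiLp.inner_apply, dotProduct, Real.norm_eq_abs, sq_abs, ← sq]
    have hsq : ‖Matrix.toEuclideanLin B a‖ ^ 2 ≤ ((1 - μ * σ) * ‖a‖) ^ 2 := by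
      rw [hn1, mul_pow, hn2]; exact hq
    nlinarith [norm_nonneg (Matrix.toEuclideanLin B a), norm_nonneg a,
      mul_nonneg hc0 (norm_nonneg a), hsq]
  have htri : ‖Matrix.toEuclideanLin B a + μ • v‖ ≤ (1 - μ * σ) * ‖a‖ + μ * ‖v‖ := by
    calc ‖Matrix.toEuclideanLin B a + μ • v‖
        ≤ ‖Matrix.toEuclideanLin B a‖ + ‖μ • v‖ := norm_add_le _ _
      _ ≤ (1 - μ * σ) * ‖a‖ + μ * ‖v‖ := by
          rw [norm_smul, Real.norm_eq_abs, abs_of_pos hμ0]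
          exact add_le_add_left hkey _
  have h2 : ‖Matrix.toEuclideanLin B a + μ • v‖ ^ 2
      ≤ ((1 - μ * σ) * ‖a‖ + μ * ‖v‖) ^ 2 :=
    pow_le_pow_left₀ (norm_nonneg _) htri 2
  have hfin : ((1 - μ * σ) * ‖a‖ + μ * ‖v‖) ^ 2
      ≤ (1 - μ * σ) * ‖a‖ ^ 2 + (μ / σ) * ‖v‖ ^ 2 := by
    have hid : (1 - μ * σ) * ‖a‖ ^ 2 + (μ / σ) * ‖v‖ ^ 2
        - ((1 - μ * σ) * ‖a‖ + μ * ‖v‖) ^ 2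
        = ((1 - μ * σ) * μ / σ) * (σ * ‖a‖ - ‖v‖) ^ 2 := by
      field_simp
      ring
    have hpos : 0 ≤ ((1 - μ * σ) * μ / σ) * (σ * ‖a‖ - ‖v‖) ^ 2 := by
      apply mul_nonneg
      · apply div_nonneg (mul_nonneg hc0 hμ0.le) hσ.le
      · exact sq_nonneg _
    linarith
  exact le_trans h2 hfin
end

section
/- Let X be a real random variable with E[X²] < ∞ and let c > 0, d > 0. Then E[log₂(2 + ln(1 + c|X|)/d)] ≤ log₂(2 + ln(1 + c·√(E[X²]))/d), where the random variable inside the expectation on the left is integrable. -/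
open MeasureTheory

private lemma concaveOn_comp_mono {s t : Set ℝ} {f g : ℝ → ℝ}
    (hg : ConcaveOn ℝ t g) (hmono : MonotoneOn g t) (hf : ConcaveOn ℝ s f)
    (hmem : ∀ x ∈ s, f x ∈ t) : ConcaveOn ℝ s (fun x => g (f x)) :=
  ⟨hf.1, fun x hx y hy a b ha hb hab => by
    have hfx := hmem x hx; have hfy := hmem y hy
    have h1 : a • g (f x) + b • g (f y) ≤ g (a • f x + b • f y) := hg.2 hfx hfy ha hb hab
    have h2 : a • f x + b • f y ∈ t := hg.1 hfx hfy ha hb hab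
    exact h1.trans (hmono h2 (hmem _ (hf.1 hx hy ha hb hab)) (hf.2 hx hy ha hb hab))⟩

/-- **Jensen bound for the expected variable-rate bit budget.** Let `X` be a real
random variable with `E[X²] < ∞` and let `c > 0`, `d > 0`. Then the random
variable `log₂(2 + ln(1 + c|X|)/d)` is integrable and
`E[log₂(2 + ln(1 + c|X|)/d)] ≤ log₂(2 + ln(1 + c·√(E[X²]))/d)`. -/
theorem expected_bit_budget_bound
    {Ω : Type*} [MeasureSpace Ω] [IsProbabilityMeasure (volume : Measure Ω)]
    (X : Ω → ℝ) (hX : MemLp X 2)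
    (c d : ℝ) (hc : 0 < c) (hd : 0 < d) :
    Integrable (fun ω => Real.logb 2 (2 + Real.log (1 + c * |X ω|) / d)) ∧
    ∫ ω, Real.logb 2 (2 + Real.log (1 + c * |X ω|) / d)
      ≤ Real.logb 2 (2 + Real.log (1 + c * Real.sqrt (∫ ω, (X ω) ^ 2)) / d) := by
  set ψ : ℝ → ℝ := fun u => Real.logb 2 (2 + Real.log (1 + c * Real.sqrt u) / d) with hψdef
  -- basic positivity facts
  have hinner_pos : ∀ u : ℝ, (0:ℝ) < 1 + c * Real.sqrt u := fun u => by
    have := Real.sqrt_nonneg u; nlinarith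
  have hlog_nonneg : ∀ u : ℝ, (0:ℝ) ≤ Real.log (1 + c * Real.sqrt u) := fun u => by
    apply Real.log_nonneg; have := Real.sqrt_nonneg u; nlinarith
  have harg_ge : ∀ u : ℝ, (2:ℝ) ≤ 2 + Real.log (1 + c * Real.sqrt u) / d := fun u => by
    have := hlog_nonneg u; have := div_nonneg this hd.le; linarith
  -- continuity of ψ
  have hcont : Continuous ψ := by
    rw [continuous_iff_continuousAt]
    intro u
    have h1 : ContinuousAt (fun u : ℝ => 1 + c * Real.sqrt u) u := by fun_prop
    have h2 : ContinuousAt (fun u : ℝ => Real.log (1 + c * Real.sqrt u)) u :=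
      ContinuousAt.comp (g := Real.log) (Real.continuousAt_log (hinner_pos u).ne') h1
    have h3 : ContinuousAt (fun u : ℝ => 2 + Real.log (1 + c * Real.sqrt u) / d) u :=
      (continuousAt_const.add (h2.div_const d))
    have h4 : ContinuousAt (Real.logb 2) (2 + Real.log (1 + c * Real.sqrt u) / d) := by
      unfold Real.logb
      exact (Real.continuousAt_log (by have := harg_ge u; linarith)).div_const _
    exact ContinuousAt.comp (g := Real.logb 2) h4 h3
  -- concavity of ψ on Ici 0
  have hsqrt : ConcaveOn ℝ (Set.Ici 0) (fun u : ℝ => Real.sqrt u) :=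
    Real.strictConcaveOn_sqrt.concaveOn
  have haff : ConcaveOn ℝ (Set.Ici 0) (fun u : ℝ => 1 + c * Real.sqrt u) := by
    have := (hsqrt.smul hc.le).add_const 1
    convert this using 1
    case e'_4 => rfl
    case e'_10 => rfl
    funext u; simp [smul_eq_mul, add_comm]
  have hlogc : ConcaveOn ℝ (Set.Ici 0) (fun u : ℝ => Real.log (1 + c * Real.sqrt u)) :=
    concaveOn_comp_mono strictConcaveOn_log_Ioi.concaveOn
      Real.strictMonoOn_log.monotoneOn haff (fun x _ => hinner_pos x)
  have hmid : ConcaveOn ℝ (Set.Ici 0)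
      (fun u : ℝ => 2 + Real.log (1 + c * Real.sqrt u) / d) := by
    have h := (hlogc.smul (le_of_lt (by positivity : (0:ℝ) < 1/d))).add_const 2
    convert h using 1
    case e'_4 => rfl
    case e'_10 => rfl
    funext u; simp [smul_eq_mul, Pi.add_apply]; ring
  have hlogb_concave : ConcaveOn ℝ (Set.Ici 2) (Real.logb 2) := by
    have hlog : ConcaveOn ℝ (Set.Ici 2) Real.log :=
      strictConcaveOn_log_Ioi.concaveOn.subset
        (fun x hx => show (0:ℝ) < x from lt_of_lt_of_le two_pos hx) (convex_Ici _)
    have h := hlog.smul (le_of_lt (by positivity : (0:ℝ) < 1 / Real.log 2))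
    convert h using 1
    case e'_4 => rfl
    case e'_10 => rfl
    funext t; simp [smul_eq_mul, Real.logb]; ring
  have hlogb_mono : MonotoneOn (Real.logb 2) (Set.Ici 2) := fun a ha b _ hab =>
    Real.logb_le_logb_of_le one_lt_two (lt_of_lt_of_le two_pos ha) hab
  have hψconc : ConcaveOn ℝ (Set.Ici 0) ψ :=
    concaveOn_comp_mono hlogb_concave hlogb_mono hmid (fun x _ => harg_ge x)
  -- integrability
  have hXsq : Integrable (fun ω => (X ω) ^ 2) := hX.integrable_sq
  have hXm := hX.aestronglyMeasurable
  have hmeas : AEStronglyMeasurable (fun ω => ψ ((X ω) ^ 2)) volume :=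
    hcont.comp_aestronglyMeasurable hXsq.aestronglyMeasurable
  have hbound : ∀ ω, ‖ψ ((X ω) ^ 2)‖ ≤ 2 * (2 + c * (1 + (X ω) ^ 2) / d) := by
    intro ω
    set u := (X ω) ^ 2 with hu
    have h2 := harg_ge u
    have hψnn : 0 ≤ ψ u := by
      have : (0:ℝ) ≤ Real.logb 2 2 := by simp
      calc (0:ℝ) ≤ Real.logb 2 2 := this
        _ ≤ ψ u := Real.logb_le_logb_of_le one_lt_two two_pos h2
    rw [Real.norm_eq_abs, abs_of_nonneg hψnn]
    have hlog2 : (1:ℝ)/2 ≤ Real.log 2 := by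
      have := Real.log_two_gt_d9; linarith
    have hloget : Real.log (2 + Real.log (1 + c * Real.sqrt u) / d)
        ≤ 2 + Real.log (1 + c * Real.sqrt u) / d := by
      have := Real.log_le_sub_one_of_pos (x := 2 + Real.log (1 + c * Real.sqrt u) / d)
        (by linarith); linarith
    have hψle : ψ u ≤ 2 * (2 + Real.log (1 + c * Real.sqrt u) / d) := by
      rw [hψdef]
      simp only [Real.logb]
      rw [div_le_iff₀ (by linarith : (0:ℝ) < Real.log 2)]
      nlinarith [hloget, harg_ge u]
    have hsqrtu : Real.sqrt u = |X ω| := Real.sqrt_sq_eq_abs (X ω)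
    have hlogle : Real.log (1 + c * Real.sqrt u) ≤ c * (1 + u) := by
      have h1 : Real.log (1 + c * Real.sqrt u) ≤ c * Real.sqrt u := by
        have := Real.log_le_sub_one_of_pos (hinner_pos u); linarith
      have h2 : Real.sqrt u ≤ 1 + u := by
        rw [hsqrtu, hu]
        nlinarith [abs_nonneg (X ω), sq_abs (X ω), sq_nonneg (|X ω| - 1)]
      nlinarith
    have : Real.log (1 + c * Real.sqrt u) / d ≤ c * (1 + u) / d :=
      (div_le_div_iff_of_pos_right hd).mpr hlogle
    linarith [hψle]
  have hgint : Integrable (fun ω => 2 * (2 + c * (1 + (X ω) ^ 2) / d)) := by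
    apply Integrable.const_mul
    apply Integrable.add (integrable_const 2)
    have : Integrable (fun ω => 1 + (X ω)^2) := (integrable_const 1).add hXsq
    simpa [mul_div_assoc] using (this.const_mul c).div_const d
  have hint : Integrable (fun ω => ψ ((X ω) ^ 2)) :=
    hgint.mono' hmeas (Filter.Eventually.of_forall hbound)
  -- identify ψ(X²) with the integrand
  have hid : ∀ ω, ψ ((X ω) ^ 2) = Real.logb 2 (2 + Real.log (1 + c * |X ω|) / d) := by
    intro ω; rw [hψdef]; simp [Real.sqrt_sq_eq_abs]
  constructor
  · exact hint.congr (Filter.Eventually.of_forall fun ω => (hid ω))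
  · have hjensen : (∫ ω, ψ ((X ω) ^ 2)) ≤ ψ (∫ ω, (X ω) ^ 2) :=
      hψconc.le_map_integral (hcont.continuousOn) isClosed_Ici
        (Filter.Eventually.of_forall fun ω => sq_nonneg (X ω)) hXsq hint
    calc ∫ ω, Real.logb 2 (2 + Real.log (1 + c * |X ω|) / d)
        = ∫ ω, ψ ((X ω) ^ 2) := by
          exact integral_congr_ae (Filter.Eventually.of_forall fun ω => (hid ω).symm)
      _ ≤ ψ (∫ ω, (X ω) ^ 2) := hjensen
      _ = _ := rfl
end
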